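/- Let I ⊂ ℝ be compact. There exists C > 0 such that for all s ∈ I, N ∈ ℤ_{≥1}, r ∈ ℝ with r ≤ 4N, and integers 0 ≤ a ≤ N: (cosh(s/√N) + 1 - r/(2N))^a ≤ 2^a · C · e^{-(a/(4N))·r + |r|/(2N)}. -/

import Mathlib

/-!
Write `cosh x + 1 = 2 (1 + sinh² (x/2))`, so that the base of the power is `2 (1 + u)` with
`u = sinh² (s/(2√N)) - r/(4N) ≥ -1`. Then `(1 + u)^a ≤ exp (a u)`, and
`a sinh² (s/(2√N)) ≤ N sinh² (s/(2√N)) ≤ (s²/4) e^{|s|}` is bounded on the compact set `I`;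
`|r|/(2N) ≥ 0` absorbs the sign of `r`.
-/

open Real

lemma Real.cosh_add_one_eq (x : ℝ) : cosh x + 1 = 2 * (1 + sinh (x / 2) ^ 2) := by
  have h := cosh_two_mul (x / 2)
  rw [mul_div_cancel₀ x two_ne_zero, cosh_sq] at h
  linarith

lemma Real.one_add_pow_le_exp_mul {u : ℝ} (hu : -1 ≤ u) (a : ℕ) :
    (1 + u) ^ a ≤ exp (a * u) := by
  rw [exp_nat_mul]
  exact pow_le_pow_left₀ (by linarith) (by linarith [add_one_le_exp u]) a

lemma Real.sinh_le_mul_exp (x : ℝ) : sinh x ≤ x * exp x := by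
  -- `sinh x = eˣ (1 - e^{-2x}) / 2` and `1 - e^{-2x} ≤ 2x`
  have h := add_one_le_exp (-(2 * x))
  have hsplit : exp (-x) = exp x * exp (-(2 * x)) := by rw [← exp_add]; ring_nf
  rw [sinh_eq, hsplit]
  nlinarith [exp_pos x]

lemma Real.abs_sinh_le (t : ℝ) : |sinh t| ≤ |t| * exp |t| := by
  rw [abs_sinh]
  exact sinh_le_mul_exp |t|

lemma Real.mul_sinh_sq_div_two_sqrt_le (s : ℝ) {x : ℝ} (hx : 1 ≤ x) :
    x * sinh (s / (2 * √x)) ^ 2 ≤ s ^ 2 / 4 * exp |s| := by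
  set t := s / (2 * √x)
  have hsqrt : 1 ≤ √x := one_le_sqrt.mpr hx
  have ht : |t| ≤ |s| / 2 := by
    rw [abs_div, abs_of_pos (show 0 < 2 * √x by linarith)]
    exact div_le_div_of_nonneg_left (abs_nonneg s) two_pos (by linarith)
  have hxt : x * t ^ 2 = s ^ 2 / 4 := by
    rw [div_pow, mul_pow, sq_sqrt (by linarith)]
    field_simp
    ring
  calc x * sinh t ^ 2 ≤ x * (|t| * exp |t|) ^ 2 := by
        rw [← sq_abs (sinh t)]
        gcongr
        exact abs_sinh_le t
    _ = x * t ^ 2 * exp |t| ^ 2 := by rw [mul_pow, sq_abs]; ring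
    _ ≤ s ^ 2 / 4 * exp (|s| / 2) ^ 2 := by rw [hxt]; gcongr
    _ = s ^ 2 / 4 * exp |s| := by
        rw [← exp_nat_mul, Nat.cast_ofNat, mul_div_cancel₀ _ two_ne_zero]

lemma IsCompact.exists_mul_sinh_sq_div_two_sqrt_le {I : Set ℝ} (hI : IsCompact I) :
    ∃ K, ∀ s ∈ I, ∀ x : ℝ, 1 ≤ x → x * sinh (s / (2 * √x)) ^ 2 ≤ K := by
  obtain ⟨K, hK⟩ := hI.exists_bound_of_continuousOn
    (f := fun s : ℝ => s ^ 2 / 4 * exp |s|) (by fun_prop)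
  exact ⟨K, fun s hs x hx =>
    (mul_sinh_sq_div_two_sqrt_le s hx).trans ((le_abs_self _).trans (hK s hs))⟩

/-- For `I ⊂ ℝ` compact there is `C > 0` such that for all `s ∈ I`, `N ≥ 1`,
`r ≤ 4N` and integers `0 ≤ a ≤ N`,
`(cosh(s/√N) + 1 - r/(2N))^a ≤ 2^a C e^{-(a/(4N)) r + |r|/(2N)}`. -/
theorem cosh_factor_bound (I : Set ℝ) (hI : IsCompact I) :
    ∃ C : ℝ, 0 < C ∧ ∀ s ∈ I, ∀ N : ℕ, 1 ≤ N → ∀ r : ℝ, r ≤ 4 * N → ∀ a : ℕ, a ≤ N →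
      (Real.cosh (s / Real.sqrt N) + 1 - r / (2 * N)) ^ a ≤
        2 ^ a * C * Real.exp (-((a : ℝ) / (4 * N)) * r + |r| / (2 * N)) := by
  obtain ⟨K, hK⟩ := hI.exists_mul_sinh_sq_div_two_sqrt_le
  refine ⟨exp K, exp_pos K, fun s hs N hN r hr a ha => ?_⟩
  have haN : (a : ℝ) ≤ N := by exact_mod_cast ha
  set S := sinh (s / (2 * √N)) ^ 2
  set u := S - r / (4 * N)
  have hbase : cosh (s / √N) + 1 - r / (2 * N) = 2 * (1 + u) := by
    rw [cosh_add_one_eq, div_div, mul_comm (√N)]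
    simp only [u]
    field_simp
    ring
  have hu : -1 ≤ u := by
    have : r / (4 * N) ≤ 1 := (div_le_one (by positivity)).mpr hr
    linarith [show 0 ≤ S from sq_nonneg _]
  have hau : a * u ≤ K + (-((a : ℝ) / (4 * N)) * r + |r| / (2 * N)) := by
    have hS : a * S ≤ K := (mul_le_mul_of_nonneg_right haN (sq_nonneg _)).trans
      (hK s hs N (by exact_mod_cast hN))
    have : a * u = a * S + -((a : ℝ) / (4 * N)) * r := by ring
    have : 0 ≤ |r| / (2 * N) := by positivity
    linarith
  calc (cosh (s / √N) + 1 - r / (2 * N)) ^ a = 2 ^ a * (1 + u) ^ a := by rw [hbase, mul_pow]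
    _ ≤ 2 ^ a * exp (a * u) := by gcongr; exact one_add_pow_le_exp_mul hu a
    _ ≤ 2 ^ a * exp (K + (-((a : ℝ) / (4 * N)) * r + |r| / (2 * N))) := by gcongr
    _ = 2 ^ a * exp K * exp (-((a : ℝ) / (4 * N)) * r + |r| / (2 * N)) := by rw [exp_add]; ring
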